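/- arXiv:1109.3137 — 4 statements merged into one kernel-verified Lean document; each statement's English description precedes it below -/
import Mathlib

section
/- If Ḡ is weakly connected and Ω, Ω₁ are nonempty disjoint compact subsets of Ḡ, then there exists an eventually flat function f ∈ 𝔸 with 0 ≤ f ≤ 1, f ≡ 1 on Ω, and f ≡ 0 on Ω₁. -/
open UniformSpace Filter Topology
open scoped ENNReal

noncomputable section

/-- A locally finite edge-weighted (resistance) graph. -/
structure WGraph (V : Type*) where
  Adj : V → V → Prop
  symm : ∀ u v, Adj u v → Adj v u
  loopless : ∀ v, ¬ Adj v v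
  R : V → V → ℝ
  Rsymm : ∀ u v, R u v = R v u
  Rpos : ∀ u v, Adj u v → 0 < R u v
  locFin : ∀ v, {u | Adj u v}.Finite

namespace WGraph

variable {V : Type*} (G : WGraph V)

/-- The set of edges, as unordered pairs of vertices. -/
def edgeSet : Set (Sym2 V) := {e | ∃ u v, G.Adj u v ∧ e = s(u, v)}

/-- The set of total lengths of finite paths joining `u` to `v`. -/
def pathLengths (u v : V) : Set ℝ :=
  {L | ∃ (n : ℕ) (p : ℕ → V), p 0 = u ∧ p n = v ∧
        (∀ k < n, G.Adj (p k) (p (k + 1))) ∧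
        L = ∑ k ∈ Finset.range n, G.R (p k) (p (k + 1))}

/-- `G` is connected: any two vertices are joined by a finite path. -/
def Connected : Prop := ∀ u v : V, (G.pathLengths u v).Nonempty

/-- The metric on the vertex set is the minimal resistance path metric of `G`. -/
def IsPathMetric [MetricSpace V] : Prop :=
  ∀ u v : V, dist u v = sInf (G.pathLengths u v)

/-- Eventually flat functions: the values differ across only finitely many edges. -/
def EventuallyFlat (φ : V → ℝ) : Prop :=
  {p : V × V | G.Adj p.1 p.2 ∧ φ p.1 ≠ φ p.2}.Finite

open Classical in
/-- The conductance: the reciprocal resistance on edges, `0` off edges. -/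
def cond (u v : V) : ℝ := if G.Adj u v then (G.R u v)⁻¹ else 0

/-- `f` is harmonic at `v`: its value is the conductance-weighted average of the
values at the adjacent vertices. -/
def HarmonicAt (f : V → ℝ) (v : V) : Prop :=
  f v = (∑ u ∈ (G.locFin v).toFinset, G.cond u v)⁻¹ *
          ∑ u ∈ (G.locFin v).toFinset, G.cond u v * f u

/-- The weighted `ℓ²(μ)` inner product. -/
def winner (μ : V → ℝ) (f g : V → ℝ) : ℝ := ∑' v, f v * g v * μ v

/-- The bilinear (energy) form associated to conductances `C`. -/
def Bform (C : V → V → ℝ) (f g : V → ℝ) : ℝ :=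
  (1 / 2) * ∑' p : V × V, C p.1 p.2 * (f p.1 - f p.2) * (g p.1 - g p.2)

/-- The formal Laplacian `Δ_μ`. -/
def lap (C : V → V → ℝ) (μ : V → ℝ) (f : V → ℝ) (v : V) : ℝ :=
  (1 / μ v) * ∑' u, C u v * (f v - f u)

/-- The (possibly infinite) energy of `f`. -/
def energy (C : V → V → ℝ) (f : V → ℝ) : ℝ≥0∞ :=
  (1 / 2) * ∑' p : V × V, ENNReal.ofReal (C p.1 p.2 * (f p.1 - f p.2) ^ 2)

variable [MetricSpace V]

/-- A path in the completion `Ḡ` joining `x` and `y`: a two-sided sequence of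
vertices (stationary steps are allowed, so this encodes finite paths, rays and
double rays) converging to `x` and `y` at its two ends. -/
structure CPath (x y : Completion V) where
  p : ℤ → V
  step : ∀ k, p k = p (k + 1) ∨ G.Adj (p k) (p (k + 1))
  tendsto_left : Tendsto (fun n : ℕ => ((p (-(n : ℤ)) : V) : Completion V)) atTop (nhds x)
  tendsto_right : Tendsto (fun n : ℕ => ((p (n : ℤ) : V) : Completion V)) atTop (nhds y)

end WGraph

/-- The path `γ` uses (contains) the edge `e`. -/
def WGraph.CPath.uses {V : Type*} [MetricSpace V] {G : WGraph V}
    {x y : Completion V} (γ : G.CPath x y) (e : Sym2 V) : Prop :=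
  ∃ k : ℤ, γ.p k ≠ γ.p (k + 1) ∧ e = s(γ.p k, γ.p (k + 1))

namespace WGraph

variable {V : Type*} (G : WGraph V) [MetricSpace V]

/-- The completion `Ḡ` is weakly connected: any two distinct points admit a
finite set of edges met by every path joining them. -/
def WeaklyConnected : Prop :=
  ∀ x y : Completion V, x ≠ y →
    ∃ W : Set (Sym2 V), W.Finite ∧ W ⊆ G.edgeSet ∧
      ∀ γ : G.CPath x y, ∃ e ∈ W, γ.uses e

end WGraph

/-! Weak connectivity separates two points `x ≠ y` of `Ḡ` by a finite edge set `W`. After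
deleting `W`, the indicator of the component of a vertex near `x` jumps only across edges of `W`,
hence is eventually flat, and it is constant at scales below the least resistance `r` of an edge
of `W`, hence extends continuously to `Ḡ`, equal to `1` near `x`. It is `0` near `y`: a vertex
near `y` in the same component would give, by gluing short paths into rays converging to `x`
and to `y`, a path from `x` to `y` avoiding `W`. Two compactness arguments, taking maxima of
finitely many such functions, then separate `Ω` from `Ω1`. -/

section Concat

variable {α : Type*}

/-- The position `(i, j)` of the `m`-th term when the blocks `j = 0, …, n i` are laid end to
end; the last term of a block and the first of the next both occur. -/
def blockPos (n : ℕ → ℕ) : ℕ → ℕ × ℕ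
  | 0 => (0, 0)
  | m + 1 =>
    if (blockPos n m).2 < n (blockPos n m).1 then ((blockPos n m).1, (blockPos n m).2 + 1)
    else ((blockPos n m).1 + 1, 0)

theorem blockPos_snd_le (n : ℕ → ℕ) : ∀ m, (blockPos n m).2 ≤ n (blockPos n m).1
  | 0 => Nat.zero_le _
  | m + 1 => by
    simp only [blockPos]
    split_ifs with h
    exacts [h, Nat.zero_le _]

theorem blockPos_add_of_eq {n : ℕ → ℕ} {m i : ℕ} (h : blockPos n m = (i, 0)) :
    ∀ k ≤ n i, blockPos n (m + k) = (i, k)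
  | 0, _ => h
  | k + 1, hk => by
    rw [← add_assoc, blockPos, blockPos_add_of_eq h k (by omega)]
    exact if_pos hk

theorem exists_blockPos_eq (n : ℕ → ℕ) : ∀ i, ∃ m, blockPos n m = (i, 0)
  | 0 => ⟨0, rfl⟩
  | i + 1 => by
    obtain ⟨m, hm⟩ := exists_blockPos_eq n i
    refine ⟨m + n i + 1, ?_⟩
    rw [blockPos, blockPos_add_of_eq hm _ le_rfl, if_neg (lt_irrefl _)]

theorem tendsto_blockPos_fst (n : ℕ → ℕ) : Tendsto (fun m => (blockPos n m).1) atTop atTop := by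
  refine tendsto_atTop_atTop_of_monotone (monotone_nat_of_le_succ fun m => ?_) fun i => ?_
  · simp only [blockPos]
    split_ifs <;> simp
  · obtain ⟨m, hm⟩ := exists_blockPos_eq n i
    exact ⟨m, by rw [hm]⟩

def concatBlocks (P : ℕ → ℕ → α) (n : ℕ → ℕ) (m : ℕ) : α :=
  P (blockPos n m).1 (blockPos n m).2

theorem reflGen_concatBlocks {r : α → α → Prop} {P : ℕ → ℕ → α} {n : ℕ → ℕ}
    (hstep : ∀ i, ∀ j < n i, r (P i j) (P i (j + 1))) (hjoin : ∀ i, P i (n i) = P (i + 1) 0)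
    (m : ℕ) : Relation.ReflGen r (concatBlocks P n m) (concatBlocks P n (m + 1)) := by
  unfold concatBlocks
  simp only [blockPos]
  split_ifs with h
  · exact .single (hstep _ _ h)
  · rw [le_antisymm (blockPos_snd_le n m) (not_lt.1 h), hjoin]

theorem eventually_concatBlocks_mem {P : ℕ → ℕ → α} {n : ℕ → ℕ} {s : Set α}
    (h : ∀ᶠ i in atTop, ∀ j ≤ n i, P i j ∈ s) : ∀ᶠ m in atTop, concatBlocks P n m ∈ s :=
  ((tendsto_blockPos_fst n).eventually h).mono fun m hm => hm _ (blockPos_snd_le n m)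

end Concat

theorem Set.Finite.preimage_sym2Mk {V : Type*} {W : Set (Sym2 V)} (hW : W.Finite) :
    {p : V × V | s(p.1, p.2) ∈ W}.Finite :=
  hW.preimage' fun e _ => by
    induction e using Sym2.ind with
    | _ u v =>
      refine (Set.toFinite {(u, v), (v, u)}).subset fun p hp => ?_
      have hp : s(p.1, p.2) = s((u, v).1, (u, v).2) := hp
      rcases Sym2.mk_eq_mk_iff.1 hp with rfl | rfl <;> simp

namespace SimpleGraph

variable {V : Type*} {H : SimpleGraph V}

theorem reachable_of_forall_adj_succ {p : ℕ → V} :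
    ∀ {n}, (∀ k < n, H.Adj (p k) (p (k + 1))) → H.Reachable (p 0) (p n)
  | 0, _ => .refl _
  | n + 1, h =>
    (reachable_of_forall_adj_succ fun k hk => h k (by omega)).trans (h n (by omega)).reachable

section Rays

variable [UniformSpace V]

variable (H) in
def HasRayTo (v : V) (z : Completion V) : Prop :=
  ∃ q : ℕ → V, q 0 = v ∧ (∀ m, Relation.ReflGen H.Adj (q m) (q (m + 1))) ∧
    Tendsto (fun m => (q m : Completion V)) atTop (𝓝 z)

theorem HasRayTo.cons {v w : V} {z : Completion V} (hvw : H.Adj v w) (h : H.HasRayTo w z) :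
    H.HasRayTo v z := by
  obtain ⟨q, hq0, hq, hqz⟩ := h
  refine ⟨fun m => Nat.casesOn (motive := fun _ => V) m v q, rfl, fun m => ?_,
    (tendsto_add_atTop_iff_nat 1).1 hqz⟩
  cases m with
  | zero => exact .single (show H.Adj v (q 0) from hq0 ▸ hvw)
  | succ m => exact hq m

theorem Reachable.hasRayTo {v w : V} {z : Completion V} (hvw : H.Reachable v w)
    (h : H.HasRayTo w z) : H.HasRayTo v z := by
  obtain ⟨p⟩ := hvw
  induction p with
  | nil => exact h
  | cons hadj _ ih => exact (ih h).cons hadj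

end Rays

end SimpleGraph

theorem UniformSpace.Completion.exists_dist_coe_lt {V : Type*} [PseudoMetricSpace V]
    (z : Completion V) {ε : ℝ} (hε : 0 < ε) : ∃ v : V, dist (v : Completion V) z < ε := by
  obtain ⟨v, hv⟩ := Metric.denseRange_iff.1 Completion.denseRange_coe z ε hε
  exact ⟨v, by rwa [dist_comm]⟩

theorem UniformSpace.Completion.extension_eq_of_dist_lt {V β : Type*} [PseudoMetricSpace V]
    [UniformSpace β] [CompleteSpace β] [T0Space β] {f : V → β} {r : ℝ}
    (hf : ∀ u w, dist u w < r → f u = f w) {u : V} {z : Completion V}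
    (hz : dist (u : Completion V) z < r) : Completion.extension f z = f u := by
  have huc : UniformContinuous f := fun U hU => Filter.mem_map.2 <|
    Filter.mem_of_superset (Metric.dist_mem_uniformity (dist_nonneg.trans_lt hz)) fun p hp =>
      show (f p.1, f p.2) ∈ U by rw [hf _ _ hp]; exact refl_mem_uniformity hU
  have hev : ∀ᶠ w in Filter.comap (↑) (𝓝 z), f w = f u := by
    refine Filter.mem_of_superset (preimage_mem_comap (Metric.ball_mem_nhds z (sub_pos.2 hz)))
      fun w hw => (hf u w ?_).symm
    rw [← Completion.dist_eq]
    linarith [dist_triangle (u : Completion V) z w, dist_comm (w : Completion V) z,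
      Metric.mem_ball.1 hw]
  have hlim : Tendsto f (Filter.comap (↑) (𝓝 z)) (𝓝 (Completion.extension f z)) := by
    have h := ((Completion.continuous_extension (f := f)).tendsto z).comp
      (tendsto_comap (f := ((↑) : V → Completion V)))
    simpa [Function.comp_def, Completion.extension_coe huc] using h
  have := Completion.isDenseInducing_coe.comap_nhds_neBot (α := V) z
  exact tendsto_nhds_unique hlim (tendsto_const_nhds.congr' (hev.mono fun w hw => hw.symm))

namespace WGraph

variable {V : Type*} (G : WGraph V)

def toSimpleGraph : SimpleGraph V where
  Adj := G.Adj
  symm := ⟨G.symm⟩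
  loopless := ⟨G.loopless⟩

variable {G}

theorem EventuallyFlat.comp₂ {φ ψ : V → ℝ} (hφ : G.EventuallyFlat φ) (hψ : G.EventuallyFlat ψ)
    (op : ℝ → ℝ → ℝ) : G.EventuallyFlat fun v => op (φ v) (ψ v) := by
  refine (Set.Finite.union hφ hψ).subset fun p ⟨hadj, hne⟩ => ?_
  by_contra h
  exact hne (congrArg₂ op (not_not.1 fun h' => h (.inl ⟨hadj, h'⟩))
    (not_not.1 fun h' => h (.inr ⟨hadj, h'⟩)))

theorem eventuallyFlat_const (c : ℝ) : G.EventuallyFlat fun _ => c :=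
  Set.finite_empty.subset fun _ hp => hp.2 rfl

theorem eventuallyFlat_of_finite {W : Set (Sym2 V)} (hW : W.Finite) {φ : V → ℝ}
    (h : ∀ u v, G.Adj u v → s(u, v) ∉ W → φ u = φ v) : G.EventuallyFlat φ :=
  hW.preimage_sym2Mk.subset fun _ ⟨hadj, hne⟩ => by_contra fun hp => hne (h _ _ hadj hp)

theorem exists_pos_le_R_of_finite {W : Set (Sym2 V)} (hW : W.Finite) :
    ∃ r > 0, ∀ u v, G.Adj u v → s(u, v) ∈ W → r ≤ G.R u v := by
  have hS : {p : V × V | G.Adj p.1 p.2 ∧ s(p.1, p.2) ∈ W}.Finite :=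
    hW.preimage_sym2Mk.subset fun _ hp => hp.2
  have hev : ∀ᶠ r in 𝓝[>] (0 : ℝ), ∀ p ∈ {p : V × V | G.Adj p.1 p.2 ∧ s(p.1, p.2) ∈ W},
      r ≤ G.R p.1 p.2 :=
    hS.eventually_all.2 fun p hp =>
      nhdsWithin_le_nhds ((eventually_lt_nhds (G.Rpos _ _ hp.1)).mono fun _ h => h.le)
  obtain ⟨r, hr, hrpos⟩ := (hev.and self_mem_nhdsWithin).exists
  exact ⟨r, hrpos, fun u v huv huvW => hr (u, v) ⟨huv, huvW⟩⟩

theorem pathLengths_nonneg {u v : V} {L : ℝ} (hL : L ∈ G.pathLengths u v) : 0 ≤ L := by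
  obtain ⟨n, p, -, -, hadj, rfl⟩ := hL
  exact Finset.sum_nonneg fun k hk => (G.Rpos _ _ (hadj k (Finset.mem_range.mp hk))).le

section Metric

variable [MetricSpace V]

variable (G) in
/-- The algebra `𝔸`. -/
def flatAlgebra : Subalgebra ℝ (Completion V → ℝ) where
  carrier := {F | Continuous F ∧ G.EventuallyFlat fun v => F v}
  mul_mem' ha hb := ⟨ha.1.mul hb.1, ha.2.comp₂ hb.2 (· * ·)⟩
  add_mem' ha hb := ⟨ha.1.add hb.1, ha.2.comp₂ hb.2 (· + ·)⟩
  algebraMap_mem' c := ⟨continuous_const, eventuallyFlat_const c⟩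

theorem sup_mem_flatAlgebra {F F' : Completion V → ℝ} (hF : F ∈ G.flatAlgebra)
    (hF' : F' ∈ G.flatAlgebra) : F ⊔ F' ∈ G.flatAlgebra :=
  ⟨hF.1.sup hF'.1, hF.2.comp₂ hF'.2 (· ⊔ ·)⟩

theorem dist_le_of_mem_pathLengths (hmet : G.IsPathMetric) {u v : V} {L : ℝ}
    (hL : L ∈ G.pathLengths u v) : dist u v ≤ L := by
  rw [hmet]
  exact csInf_le ⟨0, fun _ => pathLengths_nonneg⟩ hL

theorem exists_path_sum_lt (hmet : G.IsPathMetric) (hconn : G.Connected) {u v : V} {b : ℝ}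
    (h : dist u v < b) :
    ∃ (n : ℕ) (p : ℕ → V), p 0 = u ∧ p n = v ∧ (∀ k < n, G.Adj (p k) (p (k + 1))) ∧
      ∑ k ∈ Finset.range n, G.R (p k) (p (k + 1)) < b := by
  rw [hmet] at h
  obtain ⟨_, ⟨n, p, h0, hn, hadj, rfl⟩, hb⟩ := exists_lt_of_csInf_lt (hconn u v) h
  exact ⟨n, p, h0, hn, hadj, hb⟩

theorem exists_path_deleteEdges (hmet : G.IsPathMetric) (hconn : G.Connected)
    {W : Set (Sym2 V)} {r b : ℝ} (hW : ∀ u v, G.Adj u v → s(u, v) ∈ W → r ≤ G.R u v)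
    (hb : b ≤ r) {u w : V} (h : dist u w < b) :
    ∃ (n : ℕ) (p : ℕ → V), p 0 = u ∧ p n = w ∧
      (∀ k < n, (G.toSimpleGraph.deleteEdges W).Adj (p k) (p (k + 1))) ∧
      ∀ j ≤ n, dist u (p j) < b := by
  obtain ⟨n, p, h0, hn, hadj, hlen⟩ := exists_path_sum_lt hmet hconn h
  have hR : ∀ i ∈ Finset.range n, 0 ≤ G.R (p i) (p (i + 1)) := fun i hi =>
    (G.Rpos _ _ (hadj i (Finset.mem_range.1 hi))).le
  refine ⟨n, p, h0, hn, fun k hk => SimpleGraph.deleteEdges_adj.2 ⟨hadj k hk, fun hkW => ?_⟩,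
    fun j hj => ?_⟩
  · have := Finset.single_le_sum hR (Finset.mem_range.2 hk)
    linarith [hW _ _ (hadj k hk) hkW]
  · have hprefix : ∑ k ∈ Finset.range j, G.R (p k) (p (k + 1)) ∈ G.pathLengths u (p j) :=
      ⟨j, p, h0, rfl, fun k hk => hadj k (by omega), rfl⟩
    calc dist u (p j) ≤ ∑ k ∈ Finset.range j, G.R (p k) (p (k + 1)) :=
          dist_le_of_mem_pathLengths hmet hprefix
      _ ≤ ∑ k ∈ Finset.range n, G.R (p k) (p (k + 1)) :=
          Finset.sum_le_sum_of_subset_of_nonneg (Finset.range_subset_range.2 hj)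
            fun i hi _ => hR i hi
      _ < b := hlen

theorem reachable_deleteEdges_of_dist_lt (hmet : G.IsPathMetric) (hconn : G.Connected)
    {W : Set (Sym2 V)} {r : ℝ} (hW : ∀ u v, G.Adj u v → s(u, v) ∈ W → r ≤ G.R u v)
    {u w : V} (h : dist u w < r) : (G.toSimpleGraph.deleteEdges W).Reachable u w := by
  obtain ⟨n, p, rfl, rfl, hadj, -⟩ := exists_path_deleteEdges hmet hconn hW le_rfl h
  exact SimpleGraph.reachable_of_forall_adj_succ hadj

theorem hasRayTo_deleteEdges (hmet : G.IsPathMetric) (hconn : G.Connected)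
    {W : Set (Sym2 V)} {r : ℝ} (hr : 0 < r) (hW : ∀ u v, G.Adj u v → s(u, v) ∈ W → r ≤ G.R u v)
    {v : V} {z : Completion V} (hv : dist (v : Completion V) z < r / 2) :
    (G.toSimpleGraph.deleteEdges W).HasRayTo v z := by
  set ε : ℕ → ℝ := fun i => r / 2 * (1 / 2) ^ i with hε
  have hεpos : ∀ i, 0 < ε i := fun i => by positivity
  have hε0 : Tendsto ε atTop (𝓝 0) := by
    rw [hε]
    simpa using (tendsto_pow_atTop_nhds_zero_of_lt_one (by norm_num)
      (by norm_num : (1 : ℝ) / 2 < 1)).const_mul (r / 2)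
  obtain ⟨a, ha0, ha⟩ : ∃ a : ℕ → V, a 0 = v ∧ ∀ i, dist (a i : Completion V) z < ε i := by
    choose a' ha' using fun i => Completion.exists_dist_coe_lt z (hεpos i)
    refine ⟨fun i => if i = 0 then v else a' i, rfl, fun i => ?_⟩
    dsimp only
    split_ifs with hi
    · simpa [hε, hi] using hv
    · exact ha' i
  have hstep : ∀ i, dist (a i) (a (i + 1)) < 2 * ε i := fun i => by
    have : ε (i + 1) = ε i / 2 := by simp only [hε, pow_succ]; ring
    rw [← Completion.dist_eq]
    linarith [dist_triangle_right (a i : Completion V) (a (i + 1)) z, ha i, ha (i + 1), hεpos i]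
  have hle : ∀ i, 2 * ε i ≤ r := fun i => by
    have : ((1 : ℝ) / 2) ^ i ≤ 1 := pow_le_one₀ (by norm_num) (by norm_num)
    simp only [hε]
    nlinarith
  choose n P hP0 hPn hPadj hPdist using fun i =>
    exists_path_deleteEdges hmet hconn hW (hle i) (hstep i)
  refine ⟨concatBlocks P n, by simp [concatBlocks, blockPos, hP0, ha0],
    reflGen_concatBlocks hPadj fun i => by rw [hPn, hP0], Metric.tendsto_nhds.2 fun δ hδ => ?_⟩
  refine eventually_concatBlocks_mem (s := {w : V | dist (w : Completion V) z < δ}) ?_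
  filter_upwards [(hε0.const_mul 3).eventually (gt_mem_nhds (by simpa using hδ))] with i hi j hj
  calc dist (P i j : Completion V) z
        ≤ dist (P i j : Completion V) (a i) + dist (a i : Completion V) z := dist_triangle _ _ _
    _ < 2 * ε i + ε i := by
        rw [Completion.dist_eq, dist_comm]
        exact add_lt_add (hPdist i j hj) (ha i)
    _ = 3 * ε i := by ring
    _ < δ := hi

theorem exists_cPath_of_hasRayTo {H : SimpleGraph V} (hH : H ≤ G.toSimpleGraph) {v : V}
    {x y : Completion V} (hx : H.HasRayTo v x) (hy : H.HasRayTo v y) :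
    ∃ γ : G.CPath x y, ∀ k, Relation.ReflGen H.Adj (γ.p k) (γ.p (k + 1)) := by
  obtain ⟨qL, hL0, hL, hLx⟩ := hx
  obtain ⟨qR, hR0, hR, hRy⟩ := hy
  let p : ℤ → V := fun k => if 0 ≤ k then qR k.toNat else qL (-k).toNat
  have hpL : ∀ m : ℕ, p (-m) = qL m := fun m => by
    rcases Nat.eq_zero_or_pos m with rfl | hm
    · simp [p, hL0, hR0]
    · simp [p, hm.ne']
  have hpR : ∀ m : ℕ, p m = qR m := fun m => by simp [p]
  have hp : ∀ k, Relation.ReflGen H.Adj (p k) (p (k + 1)) := fun k => by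
    obtain ⟨m, rfl | rfl⟩ := Int.eq_nat_or_neg k
    · rw [hpR, ← Nat.cast_succ, hpR]
      exact hR m
    · cases m with
      | zero => simpa [p] using hR 0
      | succ m =>
        rw [show -((m + 1 : ℕ) : ℤ) + 1 = -(m : ℤ) by push_cast; ring, hpL, hpL]
        rcases (Relation.reflGen_iff _ _ _).1 (hL m) with h | h
        · rw [h]
        · exact .single h.symm
  refine ⟨⟨p, fun k => ?_, ?_, ?_⟩, hp⟩
  · rcases (Relation.reflGen_iff _ _ _).1 (hp k) with h | h
    exacts [Or.inl h.symm, Or.inr (hH h)]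
  · simpa only [hpL] using hLx
  · simpa only [hpR] using hRy

open Classical in
theorem exists_mem_flatAlgebra_forall_eq_reachable (hmet : G.IsPathMetric)
    (hconn : G.Connected) {W : Set (Sym2 V)} (hW : W.Finite) {r : ℝ} (hr : 0 < r)
    (hrW : ∀ u v, G.Adj u v → s(u, v) ∈ W → r ≤ G.R u v) (v : V) :
    ∃ F ∈ G.flatAlgebra, F ∈ Set.Icc 0 1 ∧ ∀ (u : V) z, dist (u : Completion V) z < r →
      ∀ᶠ z' in 𝓝 z, F z' = if (G.toSimpleGraph.deleteEdges W).Reachable v u then 1 else 0 := by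
  set H := G.toSimpleGraph.deleteEdges W
  let f : V → ℝ := fun u => if H.Reachable v u then 1 else 0
  have hf : ∀ u u', H.Reachable u u' → f u = f u' := fun u u' h => by
    simp only [f, show H.Reachable v u ↔ H.Reachable v u' from ⟨(·.trans h), (·.trans h.symm)⟩]
  have hF : ∀ (u : V) z, dist (u : Completion V) z < r → Completion.extension f z = f u :=
    fun u z => Completion.extension_eq_of_dist_lt fun u u' h =>
      hf u u' (reachable_deleteEdges_of_dist_lt hmet hconn hrW h)
  have hF01 : ∀ z, Completion.extension f z ∈ Set.Icc (0 : ℝ) 1 := fun z => by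
    obtain ⟨u, hu⟩ := Completion.exists_dist_coe_lt z hr
    rw [hF u z hu]
    simp only [f]
    split_ifs <;> norm_num
  refine ⟨Completion.extension f, ⟨Completion.continuous_extension, ?_⟩,
    ⟨fun z => (hF01 z).1, fun z => (hF01 z).2⟩, fun u z h => ?_⟩
  · simp only [fun u : V => hF u u (by simpa using hr)]
    exact eventuallyFlat_of_finite hW fun u u' hadj huu' =>
      hf u u' (SimpleGraph.deleteEdges_adj.2 ⟨hadj, huu'⟩).reachable
  · exact Filter.eventually_of_mem (Metric.isOpen_ball.mem_nhds (Metric.mem_ball'.2 h))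
      fun z' hz' => hF u z' (Metric.mem_ball'.1 hz')

theorem exists_mem_flatAlgebra_separating (hmet : G.IsPathMetric) (hconn : G.Connected)
    (hw : G.WeaklyConnected) {x y : Completion V} (hxy : x ≠ y) :
    ∃ F ∈ G.flatAlgebra, F ∈ Set.Icc 0 1 ∧ (∀ᶠ z in 𝓝 x, F z = 1) ∧ ∀ᶠ z in 𝓝 y, F z = 0 := by
  obtain ⟨W, hWfin, -, hWsep⟩ := hw x y hxy
  obtain ⟨r, hr, hrW⟩ := exists_pos_le_R_of_finite (G := G) hWfin
  obtain ⟨v, hv⟩ := Completion.exists_dist_coe_lt x (half_pos hr)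
  obtain ⟨w, hw⟩ := Completion.exists_dist_coe_lt y (half_pos hr)
  -- otherwise the rays from `v` to `x` and to `y` form a path from `x` to `y` avoiding `W`
  have hvw : ¬ (G.toSimpleGraph.deleteEdges W).Reachable v w := fun hvw => by
    obtain ⟨γ, hγ⟩ := exists_cPath_of_hasRayTo (SimpleGraph.deleteEdges_le W)
      (hasRayTo_deleteEdges hmet hconn hr hrW hv)
      (hvw.hasRayTo (hasRayTo_deleteEdges hmet hconn hr hrW hw))
    obtain ⟨e, he, k, hk, rfl⟩ := hWsep γ
    rcases (Relation.reflGen_iff _ _ _).1 (hγ k) with h | h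
    exacts [hk h.symm, (SimpleGraph.deleteEdges_adj.1 h).2 he]
  obtain ⟨F, hF, hF01, hFloc⟩ :=
    exists_mem_flatAlgebra_forall_eq_reachable hmet hconn hWfin hr hrW v
  exact ⟨F, hF, hF01,
    (hFloc v x (by linarith)).mono fun z hz => hz.trans (if_pos SimpleGraph.Reachable.rfl),
    (hFloc w y (by linarith)).mono fun z hz => hz.trans (if_neg hvw)⟩

theorem exists_mem_flatAlgebra_eventually_nhdsSet {K : Set (Completion V)} (hK : IsCompact K)
    (hKne : K.Nonempty) {l : Filter (Completion V)}
    (h : ∀ x ∈ K, ∃ F ∈ G.flatAlgebra, F ∈ Set.Icc 0 1 ∧ (∀ᶠ z in 𝓝 x, F z = 1) ∧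
      ∀ᶠ z in l, F z = 0) :
    ∃ F ∈ G.flatAlgebra, F ∈ Set.Icc 0 1 ∧ (∀ᶠ z in 𝓝ˢ K, F z = 1) ∧ ∀ᶠ z in l, F z = 0 := by
  choose! F hF hF01 hF1 hF0 using h
  obtain ⟨t, htK, ht⟩ := hK.elim_nhds_subcover_nhdsSet hF1
  have htne : t.Nonempty := by
    obtain ⟨x, hx⟩ := hKne
    obtain ⟨y, hy, -⟩ := Set.mem_iUnion₂.1 (subset_of_mem_nhdsSet ht hx)
    exact ⟨y, hy⟩
  have ⟨x₀, hx₀⟩ := htne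
  have h0 : 0 ≤ t.sup' htne F := (hF01 x₀ (htK x₀ hx₀)).1.trans (Finset.le_sup' F hx₀)
  have h1 : t.sup' htne F ≤ 1 := Finset.sup'_le htne F fun x hx => (hF01 x (htK x hx)).2
  refine ⟨t.sup' htne F, Finset.sup'_induction htne F (fun _ h _ h' => sup_mem_flatAlgebra h h')
    fun x hx => hF x (htK x hx), ⟨h0, h1⟩, Filter.mem_of_superset ht fun z hz => ?_, ?_⟩
  · obtain ⟨x, hx, hxz⟩ := Set.mem_iUnion₂.1 hz
    exact le_antisymm (h1 z) (hxz.symm.le.trans (Finset.le_sup' F hx z))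
  · filter_upwards [(eventually_all_finset t).2 fun x hx => hF0 x (htK x hx)] with z hz
    refine le_antisymm ?_ (h0 z)
    rw [Finset.sup'_apply]
    exact Finset.sup'_le _ _ fun x hx => (hz x hx).le

end Metric

end WGraph

theorem eventuallyFlat_urysohn_general {V : Type*} [MetricSpace V]
    (G : WGraph V) (hmet : G.IsPathMetric) (hconn : G.Connected)
    (hw : G.WeaklyConnected)
    (Ω Ω1 : Set (UniformSpace.Completion V))
    (hΩ : IsCompact Ω) (hΩ1 : IsCompact Ω1)
    (hne : Ω.Nonempty) (hne1 : Ω1.Nonempty) (hdisj : Disjoint Ω Ω1) :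
    ∃ (f : V → ℝ) (F : UniformSpace.Completion V → ℝ),
      G.EventuallyFlat f ∧ Continuous F ∧ (∀ v : V, F ↑v = f v) ∧
      (∀ x, F x ∈ Set.Icc (0 : ℝ) 1) ∧
      (∀ x ∈ Ω, F x = 1) ∧ (∀ x ∈ Ω1, F x = 0) := by
  have hpoint : ∀ x ∉ Ω1, ∃ F ∈ G.flatAlgebra, F ∈ Set.Icc 0 1 ∧ (∀ᶠ z in 𝓝 x, F z = 1) ∧
      ∀ᶠ z in 𝓝ˢ Ω1, F z = 0 := fun x hx => by
    obtain ⟨F, hF, hF01, hF1, hF0⟩ := G.exists_mem_flatAlgebra_eventually_nhdsSet hΩ1 hne1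
      fun y hy => G.exists_mem_flatAlgebra_separating hmet hconn hw (ne_of_mem_of_not_mem hy hx)
    exact ⟨1 - F, sub_mem (one_mem _) hF, ⟨sub_nonneg.2 hF01.2, sub_le_self _ hF01.1⟩,
      hF0.mono fun z hz => by simp [hz], hF1.mono fun z hz => by simp [hz]⟩
  obtain ⟨F, hF, hF01, hF1, hF0⟩ := G.exists_mem_flatAlgebra_eventually_nhdsSet hΩ hne
    fun x hx => hpoint x (Set.disjoint_left.1 hdisj hx)
  exact ⟨fun v => F v, F, hF.2, hF.1, fun _ => rfl, fun x => ⟨hF01.1 x, hF01.2 x⟩,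
    hF1.self_of_nhdsSet, hF0.self_of_nhdsSet⟩

/-- Urysohn-type separation of disjoint nonempty compact sets by
an eventually flat function with values in `[0,1]`. -/
theorem eventuallyFlat_urysohn {V : Type*} [MetricSpace V] [Countable V]
    (G : WGraph V) (hmet : G.IsPathMetric) (hconn : G.Connected)
    (hw : G.WeaklyConnected)
    (Ω Ω1 : Set (UniformSpace.Completion V))
    (hΩ : IsCompact Ω) (hΩ1 : IsCompact Ω1)
    (hne : Ω.Nonempty) (hne1 : Ω1.Nonempty) (hdisj : Disjoint Ω Ω1) :
    ∃ (f : V → ℝ) (F : UniformSpace.Completion V → ℝ),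
      G.EventuallyFlat f ∧ Continuous F ∧ (∀ v : V, F ↑v = f v) ∧
      (∀ x, F x ∈ Set.Icc (0 : ℝ) 1) ∧
      (∀ x ∈ Ω, F x = 1) ∧ (∀ x ∈ Ω1, F x = 0) :=
  eventuallyFlat_urysohn_general G hmet hconn hw Ω Ω1 hΩ hΩ1 hne hne1 hdisj
end
end

section
/- If G is connected (under the path metric with R(u,v) = 1/C(u,v)), then any function f : V → ℝ with B(f,f) < ∞ satisfies |f(w) − f(v)|² ≤ 4 B(f,f) d(v,w) for all vertices v,w; hence f is uniformly continuous on G and extends uniquely to a continuous function on the completion Ḡ. -/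
open UniformSpace Filter Topology
open scoped ENNReal

noncomputable section

/-! Any path from `v` to `w` can be shortened to a simple path without increasing its resistance
length `L`. Along a simple path, Cauchy–Schwarz gives `(f w - f v)² ≤ L · ∑ C (Δf)²`, and since a
simple path traverses each ordered pair of adjacent vertices at most once, the last sum is at most
`2 B(f,f)`. Taking the infimum over paths yields `|f w - f v|² ≤ 2 B(f,f) d(v,w)`; this ½-Hölder
bound makes `f` uniformly continuous, so it extends uniquely to the completion. -/

lemma add_sq_le_add_mul_add_of_sq_le_mul {a b r₁ r₂ s₁ s₂ : ℝ}
    (hr₁ : 0 ≤ r₁) (hr₂ : 0 ≤ r₂) (hs₁ : 0 ≤ s₁) (hs₂ : 0 ≤ s₂)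
    (ha : a ^ 2 ≤ r₁ * s₁) (hb : b ^ 2 ≤ r₂ * s₂) :
    (a + b) ^ 2 ≤ (r₁ + r₂) * (s₁ + s₂) := by
  have hcross_sq : (2 * a * b) ^ 2 ≤ (r₁ * s₂ + r₂ * s₁) ^ 2 := by
    nlinarith [mul_le_mul ha hb (sq_nonneg b) (by positivity), sq_nonneg (r₁ * s₂ - r₂ * s₁)]
  have hcross : 2 * a * b ≤ r₁ * s₂ + r₂ * s₁ :=
    (le_abs_self _).trans (abs_le_of_sq_le_sq hcross_sq (by positivity))
  nlinarith

namespace SimpleGraph.Walk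

variable {V : Type*} {H : SimpleGraph V}

def dartSum {u v : V} (w : H.Walk u v) (g : V → V → ℝ) : ℝ :=
  (w.darts.map fun d => g d.fst d.snd).sum

@[simp]
lemma dartSum_nil {u : V} (g : V → V → ℝ) : (nil : H.Walk u u).dartSum g = 0 := rfl

@[simp]
lemma dartSum_cons {u v w : V} (h : H.Adj u v) (p : H.Walk v w) (g : V → V → ℝ) :
    (cons h p).dartSum g = g u v + p.dartSum g := by
  simp [dartSum]

@[simp]
lemma dartSum_concat {u v w : V} (p : H.Walk u v) (h : H.Adj v w) (g : V → V → ℝ) :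
    (p.concat h).dartSum g = p.dartSum g + g v w := by
  simp [dartSum, darts_concat]

lemma dartSum_nonneg {u v : V} (w : H.Walk u v) {g : V → V → ℝ}
    (hg : ∀ a b, H.Adj a b → 0 ≤ g a b) : 0 ≤ w.dartSum g :=
  List.sum_nonneg <| by
    simp only [List.mem_map]
    rintro _ ⟨d, -, rfl⟩
    exact hg _ _ d.adj

lemma sq_sub_le_dartSum_mul_dartSum {u v : V} (w : H.Walk u v) (f : V → ℝ)
    {r s : V → V → ℝ} (hr : ∀ a b, H.Adj a b → 0 ≤ r a b)
    (hs : ∀ a b, H.Adj a b → 0 ≤ s a b)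
    (hrs : ∀ a b, H.Adj a b → (f b - f a) ^ 2 ≤ r a b * s a b) :
    (f v - f u) ^ 2 ≤ w.dartSum r * w.dartSum s := by
  induction w with
  | nil => simp
  | @cons a b c h p ih =>
    rw [dartSum_cons, dartSum_cons, ← sub_add_sub_cancel (f c) (f b) (f a),
      add_comm (f c - f b)]
    exact add_sq_le_add_mul_add_of_sq_le_mul (hr a b h) (p.dartSum_nonneg hr) (hs a b h)
      (p.dartSum_nonneg hs) (hrs a b h) ih

lemma dartSum_bypass_le [DecidableEq V] {u v : V} (w : H.Walk u v) {g : V → V → ℝ}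
    (hg : ∀ a b, H.Adj a b → 0 ≤ g a b) : w.bypass.dartSum g ≤ w.dartSum g := by
  obtain ⟨l, hperm, hsub⟩ :=
    (darts_nodup_of_support_nodup w.bypass_isPath.support_nodup).subperm
      w.darts_bypass_subset_darts
  rw [dartSum, dartSum, ← (hperm.map _).sum_eq]
  refine (hsub.map _).sum_le_sum ?_
  simp only [List.mem_map]
  rintro _ ⟨d, -, rfl⟩
  exact hg _ _ d.adj

lemma IsPath.dartSum_le_tsum {u v : V} {w : H.Walk u v} (hw : w.IsPath) {g : V → V → ℝ}
    (hg : ∀ a b, 0 ≤ g a b) (hsum : Summable fun q : V × V => g q.1 q.2) :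
    w.dartSum g ≤ ∑' q : V × V, g q.1 q.2 := by
  classical
  have hnodup : (w.darts.map Dart.toProd).Nodup :=
    (darts_nodup_of_support_nodup hw.support_nodup).map Dart.toProd_injective
  calc w.dartSum g = ∑ q ∈ (w.darts.map Dart.toProd).toFinset, g q.1 q.2 := by
        rw [List.sum_toFinset _ hnodup, List.map_map]; rfl
    _ ≤ ∑' q : V × V, g q.1 q.2 := hsum.sum_le_tsum _ fun q _ => hg q.1 q.2

end SimpleGraph.Walk

namespace WGraph

variable {V : Type*} (G : WGraph V)

lemma cond_nonneg (u v : V) : 0 ≤ G.cond u v := by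
  unfold cond
  split_ifs with h
  exacts [(inv_pos.mpr (G.Rpos u v h)).le, le_rfl]

lemma cond_mul_R {u v : V} (h : G.Adj u v) : G.cond u v * G.R u v = 1 := by
  rw [cond, if_pos h, inv_mul_cancel₀ (G.Rpos u v h).ne']

lemma exists_walk_dartSum_eq_of_mem_pathLengths {u v : V} {L : ℝ}
    (hL : L ∈ G.pathLengths u v) : ∃ w : G.toSimpleGraph.Walk u v, w.dartSum G.R = L := by
  obtain ⟨n, p, rfl, rfl, hadj, rfl⟩ := hL
  induction n with
  | zero => exact ⟨.nil, by simp⟩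
  | succ n ih =>
    obtain ⟨w, hw⟩ := ih fun k hk => hadj k (by omega)
    have hlast : G.toSimpleGraph.Adj (p n) (p (n + 1)) := hadj n n.lt_succ_self
    exact ⟨w.concat hlast, by rw [SimpleGraph.Walk.dartSum_concat, hw, Finset.sum_range_succ]⟩

lemma hasSum_energy {C : V → V → ℝ} (hC : ∀ u v, 0 ≤ C u v) {f : V → ℝ}
    (hE : energy C f ≠ ⊤) :
    HasSum (fun q : V × V => C q.1 q.2 * (f q.1 - f q.2) ^ 2) (2 * (energy C f).toReal) := by
  set t : V × V → ℝ := fun q => C q.1 q.2 * (f q.1 - f q.2) ^ 2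
  have ht : ∀ q, 0 ≤ t q := fun q => mul_nonneg (hC _ _) (sq_nonneg _)
  have htsum : ∑' q, ENNReal.ofReal (t q) = 2 * energy C f := by
    rw [energy, ← mul_assoc, one_div, ENNReal.mul_inv_cancel two_ne_zero ENNReal.ofNat_ne_top,
      one_mul]
  have hfin : ∑' q, ENNReal.ofReal (t q) ≠ ⊤ := by
    rw [htsum]
    exact ENNReal.mul_ne_top ENNReal.ofNat_ne_top hE
  have := ENNReal.hasSum_toReal hfin
  rw [← ENNReal.tsum_toReal_eq fun _ => ENNReal.ofReal_ne_top, htsum, ENNReal.toReal_mul,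
    ENNReal.toReal_ofNat] at this
  convert this using 1
  funext q
  exact (ENNReal.toReal_ofReal (ht q)).symm

lemma sq_sub_le_two_mul_energy_mul_of_mem_pathLengths {f : V → ℝ} (hE : energy G.cond f ≠ ⊤)
    {u v : V} {L : ℝ} (hL : L ∈ G.pathLengths u v) :
    (f v - f u) ^ 2 ≤ 2 * (energy G.cond f).toReal * L := by
  classical
  obtain ⟨w, rfl⟩ := G.exists_walk_dartSum_eq_of_mem_pathLengths hL
  set s : V → V → ℝ := fun a b => G.cond a b * (f a - f b) ^ 2
  have hR : ∀ a b, G.toSimpleGraph.Adj a b → 0 ≤ G.R a b := fun a b h => (G.Rpos a b h).le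
  have hs : ∀ a b, 0 ≤ s a b := fun a b => mul_nonneg (G.cond_nonneg a b) (sq_nonneg _)
  have hRs : ∀ a b, G.toSimpleGraph.Adj a b → (f b - f a) ^ 2 ≤ G.R a b * s a b := by
    intro a b h
    rw [← mul_assoc, mul_comm (G.R a b), G.cond_mul_R h, one_mul, ← neg_sub, neg_sq]
  have hpath_energy : w.bypass.dartSum s ≤ 2 * (energy G.cond f).toReal := by
    rw [← (hasSum_energy G.cond_nonneg hE).tsum_eq]
    exact w.bypass_isPath.dartSum_le_tsum hs (hasSum_energy G.cond_nonneg hE).summable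
  calc (f v - f u) ^ 2 ≤ w.bypass.dartSum G.R * w.bypass.dartSum s :=
        w.bypass.sq_sub_le_dartSum_mul_dartSum f hR (fun a b _ => hs a b) hRs
    _ ≤ w.dartSum G.R * (2 * (energy G.cond f).toReal) :=
        mul_le_mul (w.dartSum_bypass_le hR) hpath_energy
          (w.bypass.dartSum_nonneg fun a b _ => hs a b) (w.dartSum_nonneg hR)
    _ = 2 * (energy G.cond f).toReal * w.dartSum G.R := mul_comm _ _

lemma sq_sub_le_two_mul_energy_mul_dist [MetricSpace V] (hmet : G.IsPathMetric)
    (hconn : G.Connected) {f : V → ℝ} (hE : energy G.cond f ≠ ⊤) (u v : V) :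
    (f v - f u) ^ 2 ≤ 2 * (energy G.cond f).toReal * dist u v := by
  rw [hmet, ← smul_eq_mul, ← Real.sInf_smul_of_nonneg (by positivity)]
  refine le_csInf ((hconn u v).smul_set) ?_
  rintro _ ⟨L, hL, rfl⟩
  exact G.sq_sub_le_two_mul_energy_mul_of_mem_pathLengths hE hL

end WGraph

lemma uniformContinuous_of_sq_dist_le {α β : Type*} [PseudoMetricSpace α] [PseudoMetricSpace β]
    {f : α → β} {K : ℝ} (h : ∀ x y, dist (f x) (f y) ^ 2 ≤ K * dist x y) :
    UniformContinuous f := by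
  rw [Metric.uniformContinuous_iff]
  intro ε hε
  refine ⟨ε ^ 2 / (|K| + 1), by positivity, fun {x y} hxy => ?_⟩
  have hK : 0 < |K| + 1 := by positivity
  refine lt_of_pow_lt_pow_left₀ 2 hε.le ?_
  calc dist (f x) (f y) ^ 2 ≤ (|K| + 1) * dist x y :=
        (h x y).trans (mul_le_mul_of_nonneg_right (by linarith [le_abs_self K]) dist_nonneg)
    _ < (|K| + 1) * (ε ^ 2 / (|K| + 1)) := mul_lt_mul_of_pos_left hxy hK
    _ = ε ^ 2 := mul_div_cancel₀ _ hK.ne'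

lemma UniformContinuous.existsUnique_continuous_extension {α β : Type*} [UniformSpace α]
    [UniformSpace β] [CompleteSpace β] [T2Space β] {f : α → β} (hf : UniformContinuous f) :
    ∃! Φ : Completion α → β, Continuous Φ ∧ ∀ a : α, Φ a = f a :=
  ⟨Completion.extension f, ⟨Completion.continuous_extension, Completion.extension_coe hf⟩,
    fun _ ⟨hΦ, hΦf⟩ => Completion.ext hΦ Completion.continuous_extension fun a => by
      rw [hΦf, Completion.extension_coe hf]⟩

theorem finiteEnergy_extends_general {V : Type*} [MetricSpace V]
    (G : WGraph V) (hmet : G.IsPathMetric) (hconn : G.Connected)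
    (f : V → ℝ) (hE : WGraph.energy G.cond f ≠ ⊤) :
    (∀ v w : V, |f w - f v| ^ 2 ≤ 4 * (WGraph.energy G.cond f).toReal * dist v w) ∧
    (∃! Φ : UniformSpace.Completion V → ℝ, Continuous Φ ∧ ∀ v : V, Φ ↑v = f v) := by
  have hbound :
      ∀ v w : V, |f w - f v| ^ 2 ≤ 4 * (WGraph.energy G.cond f).toReal * dist v w := by
    intro v w
    rw [sq_abs]
    refine (G.sq_sub_le_two_mul_energy_mul_dist hmet hconn hE v w).trans ?_
    gcongr
    norm_num
  refine ⟨hbound, UniformContinuous.existsUnique_continuous_extension ?_⟩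
  refine uniformContinuous_of_sq_dist_le (K := 4 * (WGraph.energy G.cond f).toReal) fun x y => ?_
  rw [Real.dist_eq, dist_comm]
  exact hbound y x

/-- functions of finite energy are (Hölder-)uniformly continuous,
`|f(w) - f(v)|² ≤ 4 B(f,f) d(v,w)`, and extend uniquely and continuously to
the completion. -/
theorem finiteEnergy_extends {V : Type*} [MetricSpace V] [Countable V]
    (G : WGraph V) (hmet : G.IsPathMetric) (hconn : G.Connected)
    (f : V → ℝ) (hE : WGraph.energy G.cond f ≠ ⊤) :
    (∀ v w : V, |f w - f v| ^ 2 ≤ 4 * (WGraph.energy G.cond f).toReal * dist v w) ∧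
    (∃! Φ : UniformSpace.Completion V → ℝ, Continuous Φ ∧ ∀ v : V, Φ ↑v = f v) :=
  finiteEnergy_extends_general G hmet hconn f hE
end
end

section
/- If G is connected with finite diameter, then there is a constant K such that sup_v |f(v)| ≤ K·‖f‖_{μ,1} for all f in the Sobolev-style space H¹(μ), where ‖f‖²_{μ,1} = Σ_v f(v)²μ(v) + B(f,f); consequently Cauchy sequences in H¹(μ) converge uniformly, and the unit ball of H¹(μ) is uniformly equicontinuous. -/
open UniformSpace Filter Topology
open scoped ENNReal

noncomputable section

/-! Along a path the energy controls the oscillation of `f`: by Cauchy–Schwarz,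
`(f v - f u)² ≤ (∑ R) · (∑ C (Δf)²)` over the steps, and when no directed edge is traversed
twice the second factor is at most twice the energy. Erasing loops only shortens a path, so
the infimum over paths gives `(f u - f v)² ≤ 2 · energy · d(u, v)`. With finite diameter `D`,
comparing `f v` with its value at one fixed vertex `v₀`, where `f v₀² ≤ ‖f‖² / μ v₀`, bounds
`|f v|` by `√(2 / μ v₀ + 4D) · ‖f‖`; on the unit ball the same oscillation bound gives uniform
equicontinuity. -/

lemma SimpleGraph.Walk.sub_eq_sum_darts {V : Type*} {H : SimpleGraph V} (f : V → ℝ) {u v : V}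
    (w : H.Walk u v) : f v - f u = (w.darts.map fun d => f d.snd - f d.fst).sum := by
  induction w with
  | nil => simp
  | cons h w ih => simp [← ih]

namespace WGraph

variable {V : Type*} (G : WGraph V)

lemma cond_of_adj {u v : V} (h : G.Adj u v) : G.cond u v = (G.R u v)⁻¹ := by
  simp only [cond, if_pos h]

lemma sum_le_two_mul_energy {C : V → V → ℝ} (hC : ∀ u v, 0 ≤ C u v) {f : V → ℝ}
    (hE : energy C f ≠ ⊤) (F : Finset (V × V)) :
    ∑ q ∈ F, C q.1 q.2 * (f q.1 - f q.2) ^ 2 ≤ 2 * (energy C f).toReal := by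
  have hterm : ∀ q : V × V, 0 ≤ C q.1 q.2 * (f q.1 - f q.2) ^ 2 :=
    fun q => mul_nonneg (hC _ _) (sq_nonneg _)
  have htwo : 2 * energy C f
      = ∑' q : V × V, ENNReal.ofReal (C q.1 q.2 * (f q.1 - f q.2) ^ 2) := by
    rw [energy, ← mul_assoc, one_div, ENNReal.mul_inv_cancel two_ne_zero ENNReal.ofNat_ne_top,
      one_mul]
  have hsum := ENNReal.sum_le_tsum
    (f := fun q : V × V => ENNReal.ofReal (C q.1 q.2 * (f q.1 - f q.2) ^ 2)) F
  rw [← ENNReal.ofReal_sum_of_nonneg fun q _ => hterm q, ← htwo] at hsum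
  have := ENNReal.toReal_mono (ENNReal.mul_ne_top ENNReal.ofNat_ne_top hE) hsum
  rwa [ENNReal.toReal_ofReal (Finset.sum_nonneg fun q _ => hterm q), ENNReal.toReal_mul,
    ENNReal.toReal_ofNat] at this

def walkOfSeq (p : ℕ → V) :
    ∀ n, (∀ k < n, G.Adj (p k) (p (k + 1))) → G.toSimpleGraph.Walk (p 0) (p n)
  | 0, _ => .nil
  | n + 1, h => (walkOfSeq p n fun k hk => h k (by omega)).concat
      (show G.toSimpleGraph.Adj _ _ from h n n.lt_succ_self)

def resistance {u v : V} (w : G.toSimpleGraph.Walk u v) : ℝ :=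
  (w.darts.map fun d => G.R d.fst d.snd).sum

lemma resistance_walkOfSeq (p : ℕ → V) (n : ℕ) (h : ∀ k < n, G.Adj (p k) (p (k + 1))) :
    G.resistance (G.walkOfSeq p n h) = ∑ k ∈ Finset.range n, G.R (p k) (p (k + 1)) := by
  induction n with
  | zero => rfl
  | succ n ih =>
    rw [Finset.sum_range_succ, ← ih fun k hk => h k (by omega)]
    simp [resistance, walkOfSeq, SimpleGraph.Walk.darts_concat]

lemma resistance_bypass_le [DecidableEq V] {u v : V} (w : G.toSimpleGraph.Walk u v) :
    G.resistance w.bypass ≤ G.resistance w :=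
  (w.darts_bypass_sublist_darts.map _).sum_le_sum fun _ hr => by
    obtain ⟨d, -, rfl⟩ := List.mem_map.1 hr
    exact (G.Rpos _ _ d.adj).le

variable {f : V → ℝ}

lemma sq_sub_le_two_energy_mul_resistance (hE : energy G.cond f ≠ ⊤) {u v : V}
    (w : G.toSimpleGraph.Walk u v) (hw : w.darts.Nodup) :
    (f v - f u) ^ 2 ≤ 2 * (energy G.cond f).toReal * G.resistance w := by
  classical
  set D := w.darts.toFinset
  have hdiff : f v - f u = ∑ d ∈ D, (f d.snd - f d.fst) := by
    rw [List.sum_toFinset _ hw, w.sub_eq_sum_darts f]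
  have hres : G.resistance w = ∑ d ∈ D, G.R d.fst d.snd := (List.sum_toFinset _ hw).symm
  have hcs : (∑ d ∈ D, (f d.snd - f d.fst)) ^ 2
      ≤ (∑ d ∈ D, G.R d.fst d.snd) * ∑ d ∈ D, G.cond d.fst d.snd * (f d.fst - f d.snd) ^ 2 := by
    refine Finset.sum_sq_le_sum_mul_sum_of_sq_le_mul D (fun d _ => (G.Rpos _ _ d.adj).le)
      (fun d _ => mul_nonneg (G.cond_nonneg _ _) (sq_nonneg _)) fun d _ => ?_
    rw [G.cond_of_adj d.adj, ← mul_assoc, mul_inv_cancel₀ (G.Rpos _ _ d.adj).ne', one_mul]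
    exact le_of_eq (by ring)
  have henergy : ∑ d ∈ D, G.cond d.fst d.snd * (f d.fst - f d.snd) ^ 2
      ≤ 2 * (energy G.cond f).toReal := by
    have := sum_le_two_mul_energy G.cond_nonneg hE (D.map ⟨_, SimpleGraph.Dart.toProd_injective⟩)
    rwa [Finset.sum_map] at this
  rw [hdiff, hres, mul_comm _ (∑ d ∈ D, _)]
  exact hcs.trans (mul_le_mul_of_nonneg_left henergy
    (Finset.sum_nonneg fun d _ => (G.Rpos _ _ d.adj).le))

lemma sq_sub_le_of_mem_pathLengths (hE : energy G.cond f ≠ ⊤) {u v : V} {L : ℝ}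
    (hL : L ∈ G.pathLengths u v) : (f u - f v) ^ 2 ≤ 2 * (energy G.cond f).toReal * L := by
  classical
  obtain ⟨n, p, rfl, rfl, hadj, rfl⟩ := hL
  set w := G.walkOfSeq p n hadj
  have hpath : w.bypass.darts.Nodup :=
    SimpleGraph.Walk.darts_nodup_of_support_nodup w.bypass_isPath.support_nodup
  calc (f (p 0) - f (p n)) ^ 2 = (f (p n) - f (p 0)) ^ 2 := by ring
    _ ≤ 2 * (energy G.cond f).toReal * G.resistance w.bypass :=
      G.sq_sub_le_two_energy_mul_resistance hE _ hpath
    _ ≤ 2 * (energy G.cond f).toReal * G.resistance w :=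
      mul_le_mul_of_nonneg_left (G.resistance_bypass_le w) (by positivity)
    _ = _ := by rw [G.resistance_walkOfSeq]

lemma sq_sub_le_two_energy_mul_dist [MetricSpace V] (hmet : G.IsPathMetric)
    (hconn : G.Connected) (hE : energy G.cond f ≠ ⊤) (u v : V) :
    (f u - f v) ^ 2 ≤ 2 * (energy G.cond f).toReal * dist u v := by
  rw [hmet, ← smul_eq_mul, ← Real.sInf_smul_of_nonneg (by positivity)]
  refine le_csInf (hconn u v).smul_set ?_
  rintro _ ⟨L, hL, rfl⟩
  exact G.sq_sub_le_of_mem_pathLengths hE hL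

end WGraph

theorem h1_sup_bound_general {V : Type*} [MetricSpace V]
    (G : WGraph V) (hmet : G.IsPathMetric) (hconn : G.Connected)
    (μ : V → ℝ) (hμ : ∀ v, 0 < μ v)
    (D : ℝ) (hD : ∀ u v : V, dist u v ≤ D) :
    (∃ K : ℝ, ∀ f : V → ℝ, (Summable fun v => f v ^ 2 * μ v) →
      WGraph.energy G.cond f ≠ ⊤ → ∀ v : V,
        |f v| ≤ K * Real.sqrt ((∑' v, f v ^ 2 * μ v) + (WGraph.energy G.cond f).toReal)) ∧
    (∀ ε > (0 : ℝ), ∃ δ > (0 : ℝ), ∀ f : V → ℝ,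
      (Summable fun v => f v ^ 2 * μ v) → WGraph.energy G.cond f ≠ ⊤ →
      (∑' v, f v ^ 2 * μ v) + (WGraph.energy G.cond f).toReal ≤ 1 →
      ∀ u v : V, dist u v < δ → |f u - f v| < ε) := by
  have hmass_nonneg (f : V → ℝ) : 0 ≤ ∑' v, f v ^ 2 * μ v :=
    tsum_nonneg fun v => mul_nonneg (sq_nonneg _) (hμ v).le
  refine ⟨?_, fun ε hε => ⟨ε ^ 2 / 2, by positivity, fun f _ hE hnorm u v huv => ?_⟩⟩
  · rcases isEmpty_or_nonempty V with hV | ⟨⟨v₀⟩⟩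
    · exact ⟨0, fun f _ _ v => isEmptyElim v⟩
    refine ⟨√(2 / μ v₀ + 4 * D), fun f hS hE v => ?_⟩
    set S := ∑' v, f v ^ 2 * μ v
    set E := (WGraph.energy G.cond f).toReal
    have hD₀ : 0 ≤ D := dist_nonneg.trans (hD v₀ v₀)
    have hμ₀ := hμ v₀
    have hv₀ : f v₀ ^ 2 ≤ S / μ v₀ :=
      (le_div_iff₀ hμ₀).2 (hS.le_tsum v₀ fun w _ => mul_nonneg (sq_nonneg _) (hμ w).le)
    have hosc : (f v - f v₀) ^ 2 ≤ 2 * E * D :=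
      (G.sq_sub_le_two_energy_mul_dist hmet hconn hE v v₀).trans
        (mul_le_mul_of_nonneg_left (hD v v₀) (by positivity))
    have hE₀ : 0 ≤ 2 / μ v₀ * E := by positivity
    have hS₀ : 0 ≤ 4 * D * S := mul_nonneg (by positivity) (hmass_nonneg f)
    rw [← Real.sqrt_mul (by positivity)]
    refine Real.abs_le_sqrt ?_
    calc f v ^ 2 ≤ 2 * f v₀ ^ 2 + 2 * (f v - f v₀) ^ 2 := by
          nlinarith [sq_nonneg (f v - 2 * f v₀)]
      _ ≤ 2 * (S / μ v₀) + 2 / μ v₀ * E + 4 * D * S + 4 * E * D := by linarith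
      _ = (2 / μ v₀ + 4 * D) * (S + E) := by ring
  · have hE₁ : (WGraph.energy G.cond f).toReal ≤ 1 := by linarith [hmass_nonneg f]
    have hosc := G.sq_sub_le_two_energy_mul_dist hmet hconn hE u v
    refine abs_lt_of_sq_lt_sq ?_ hε.le
    nlinarith [dist_nonneg (x := u) (y := v), ENNReal.toReal_nonneg (a := WGraph.energy G.cond f)]

/-- on a connected graph of finite diameter, evaluation is
bounded by the `H¹(μ)` norm, and the unit ball of `H¹(μ)` is uniformly
equicontinuous. -/
theorem h1_sup_bound {V : Type*} [MetricSpace V] [Countable V]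
    (G : WGraph V) (hmet : G.IsPathMetric) (hconn : G.Connected)
    (μ : V → ℝ) (hμ : ∀ v, 0 < μ v)
    (D : ℝ) (hD : ∀ u v : V, dist u v ≤ D) :
    (∃ K : ℝ, ∀ f : V → ℝ, (Summable fun v => f v ^ 2 * μ v) →
      WGraph.energy G.cond f ≠ ⊤ → ∀ v : V,
        |f v| ≤ K * Real.sqrt ((∑' v, f v ^ 2 * μ v) + (WGraph.energy G.cond f).toReal)) ∧
    (∀ ε > (0 : ℝ), ∃ δ > (0 : ℝ), ∀ f : V → ℝ,
      (Summable fun v => f v ^ 2 * μ v) → WGraph.energy G.cond f ≠ ⊤ →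
      (∑' v, f v ^ 2 * μ v) + (WGraph.energy G.cond f).toReal ≤ 1 →
      ∀ u v : V, dist u v < δ → |f u - f v| < ε) :=
  h1_sup_bound_general G hmet hconn μ hμ D hD
end
end

section
/- Suppose G is connected, the completion Ḡ is compact, and Ḡ \ G is nonempty. If f : V → ℝ is harmonic at every vertex, extends continuously to Ḡ, and vanishes on Ḡ \ G, then f ≡ 0. (Hence 0 is not an eigenvalue of the Dirichlet Laplacian.) -/
open UniformSpace Filter Topology
open scoped ENNReal

noncomputable section

lemma WGraph.max_step {V : Type*} (G : WGraph V) (f : V → ℝ) (M : ℝ)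
    (hle : ∀ v, f v ≤ M) (u : V) (hu : G.HarmonicAt f u) (hM : f u = M)
    (u' : V) (ha : G.Adj u' u) : f u' = M := by
  classical
  set s := (G.locFin u).toFinset with hs
  have hmem : ∀ a, a ∈ s ↔ G.Adj a u := by
    intro a; simp [hs, Set.Finite.mem_toFinset]
  have hcondpos : ∀ a ∈ s, 0 < G.cond a u := by
    intro a haa
    have h := (hmem a).1 haa
    simp [WGraph.cond, h, inv_pos, G.Rpos a u h]
  have hcondnn : ∀ a ∈ s, 0 ≤ G.cond a u := fun a haa => (hcondpos a haa).le
  have hu's : u' ∈ s := (hmem u').2 ha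
  have hcpos : 0 < ∑ a ∈ s, G.cond a u :=
    Finset.sum_pos' hcondnn ⟨u', hu's, hcondpos u' hu's⟩
  have hsum : ∑ a ∈ s, G.cond a u * f a = (∑ a ∈ s, G.cond a u) * M := by
    have := hu
    rw [WGraph.HarmonicAt] at this
    have h2 : (∑ a ∈ s, G.cond a u) * f u
        = (∑ a ∈ s, G.cond a u) * ((∑ a ∈ s, G.cond a u)⁻¹ *
            ∑ a ∈ s, G.cond a u * f a) := by rw [← this]
    rw [← mul_assoc, mul_inv_cancel₀ hcpos.ne', one_mul] at h2
    rw [← h2, hM, mul_comm]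
  have hzero : ∑ a ∈ s, G.cond a u * (M - f a) = 0 := by
    simp only [mul_sub]
    rw [Finset.sum_sub_distrib]
    have h3 : ∑ a ∈ s, G.cond a u * M = (∑ a ∈ s, G.cond a u) * M :=
      (Finset.sum_mul s (fun a => G.cond a u) M).symm
    rw [h3, ← hsum, sub_self]
  have hterm : G.cond u' u * (M - f u') = 0 := by
    have hnn : ∀ a ∈ s, 0 ≤ G.cond a u * (M - f a) := fun a haa =>
      mul_nonneg (hcondnn a haa) (sub_nonneg.2 (hle a))
    exact (Finset.sum_eq_zero_iff_of_nonneg hnn).1 hzero u' hu's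
  have := mul_eq_zero.1 hterm
  rcases this with h | h
  · exact absurd h (hcondpos u' hu's).ne'
  · linarith [sub_eq_zero.1 h]

lemma WGraph.const_of_max {V : Type*} (G : WGraph V) (hconn : G.Connected)
    (f : V → ℝ) (M : ℝ) (hle : ∀ v, f v ≤ M)
    (hharm : ∀ v, G.HarmonicAt f v) (w : V) (hM : f w = M) :
    ∀ v, f v = M := by
  intro v
  obtain ⟨L, n, p, hp0, hpn, hadj, -⟩ := hconn w v
  have key : ∀ k, k ≤ n → f (p k) = M := by
    intro k hk
    induction k with
    | zero => rw [hp0]; exact hM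
    | succ m ih =>
      have hm : m ≤ n := Nat.le_of_succ_le hk
      have hmn : m < n := hk
      exact G.max_step f M hle (p m) (hharm (p m)) (ih hm)
        (p (m + 1)) (G.symm _ _ (hadj m hmn))
  rw [← hpn]; exact key n le_rfl

lemma harmonic_vanishing_le {V : Type*} [MetricSpace V] [Countable V]
    (G : WGraph V) (hconn : G.Connected)
    [CompactSpace (UniformSpace.Completion V)]
    (hbd : ¬ Function.Surjective ((↑) : V → UniformSpace.Completion V))
    (f : V → ℝ) (hharm : ∀ v : V, G.HarmonicAt f v)
    (Φ : UniformSpace.Completion V → ℝ) (hΦcont : Continuous Φ)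
    (hΦext : ∀ v : V, Φ ↑v = f v)
    (hΦ0 : ∀ x : UniformSpace.Completion V,
      x ∉ Set.range ((↑) : V → UniformSpace.Completion V) → Φ x = 0) :
    ∀ v : V, f v ≤ 0 := by
  intro v0
  have hne : Nonempty (UniformSpace.Completion V) := ⟨(v0 : UniformSpace.Completion V)⟩
  obtain ⟨x, -, hx⟩ := isCompact_univ.exists_isMaxOn Set.univ_nonempty
    hΦcont.continuousOn
  set M := Φ x with hMdef
  have hle : ∀ v : V, f v ≤ M := fun v => by
    rw [← hΦext v]; exact hx (Set.mem_univ _)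
  by_cases hMpos : 0 < M
  · exfalso
    have hxr : x ∈ Set.range ((↑) : V → UniformSpace.Completion V) := by
      by_contra h
      exact absurd (hΦ0 x h) (by linarith)
    obtain ⟨w, rfl⟩ := hxr
    have hconst : ∀ v, f v = M := G.const_of_max hconn f M hle hharm w ((hΦext w).symm)
    have hdense : Dense (Set.range ((↑) : V → UniformSpace.Completion V)) :=
      UniformSpace.Completion.denseRange_coe
    have hΦconst : Φ = fun _ => M := by
      apply Continuous.ext_on hdense hΦcont continuous_const
      rintro _ ⟨v, rfl⟩
      simp only [hΦext v, hconst v]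
    obtain ⟨y, hy⟩ := not_forall.1 hbd
    have hy' : y ∉ Set.range ((↑) : V → UniformSpace.Completion V) := by
      rintro ⟨v, rfl⟩; exact hy ⟨v, rfl⟩
    have := hΦ0 y hy'
    rw [hΦconst] at this
    linarith
  · exact (hle v0).trans (not_lt.1 hMpos)

/-- if the completion is compact with nonempty boundary, a
harmonic function which extends continuously to the completion and vanishes on
the boundary is identically zero. -/
theorem harmonic_vanishing_zero {V : Type*} [MetricSpace V] [Countable V]
    (G : WGraph V) (hmet : G.IsPathMetric) (hconn : G.Connected)
    [CompactSpace (UniformSpace.Completion V)]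
    (hbd : ¬ Function.Surjective ((↑) : V → UniformSpace.Completion V))
    (f : V → ℝ) (hharm : ∀ v : V, G.HarmonicAt f v)
    (Φ : UniformSpace.Completion V → ℝ) (hΦcont : Continuous Φ)
    (hΦext : ∀ v : V, Φ ↑v = f v)
    (hΦ0 : ∀ x : UniformSpace.Completion V,
      x ∉ Set.range ((↑) : V → UniformSpace.Completion V) → Φ x = 0) :
    ∀ v : V, f v = 0 := by
  intro v
  have h1 : f v ≤ 0 :=
    harmonic_vanishing_le G hconn hbd f hharm Φ hΦcont hΦext hΦ0 v
  have hharm' : ∀ u : V, G.HarmonicAt (fun w => -f w) u := by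
    intro u
    have h := hharm u
    rw [WGraph.HarmonicAt] at h ⊢
    simp only [mul_neg, Finset.sum_neg_distrib]
    exact congrArg Neg.neg h
  have h2 : -f v ≤ 0 := by
    have := harmonic_vanishing_le G hconn hbd (fun w => -f w) hharm'
      (fun x => -Φ x) hΦcont.neg (fun u => by simp [hΦext u])
      (fun x hx => by simp [hΦ0 x hx]) v
    simpa using this
  linarith
end
end
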